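/- arXiv:2605.29373 — 2 statements merged into one kernel-verified Lean document; each statement's English description precedes it below -/
import Mathlib

section
/- Let s, t : ℝ^{k₁} → ℝ^{k₂} be differentiable functions and let T : ℝ^{k₁} × ℝ^{k₂} → ℝ^{k₁} × ℝ^{k₂} be the affine coupling map T(a, b) = ( a, b ⊙ exp(s(a)) + t(a) ), with exp and ⊙ componentwise. Then T is differentiable at every (a, b), and the determinant of its derivative equals exp( Σ_{j=1}^{k₂} s_j(a) ); in particular det DT(a, b) > 0 and log |det DT(a, b)| = Σ_{j=1}^{k₂} s_j(a). -/
open Real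

/-!
The coupling map fixes the first factor, so its derivative is block lower-triangular with the
identity in the upper-left block; its determinant is therefore the determinant of the derivative
of the fibre map `b ↦ b ⊙ exp (s a) + t a`, which is the diagonal matrix `diag (exp (s a))`.
-/

namespace LinearMap

variable {R M N : Type*} [CommRing R] [AddCommGroup M] [Module R M] [AddCommGroup N] [Module R N]
  [Module.Free R M] [Module.Finite R M] [Module.Free R N] [Module.Finite R N]

theorem det_eq_det_snd_comp_comp_inr_of_fst_apply (f : Module.End R (M × N))
    (hf : ∀ x, (f x).1 = x.1) : f.det = (snd R M N ∘ₗ f ∘ₗ inr R M N).det := by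
  classical
  let b := Module.Free.chooseBasis R M
  let b' := Module.Free.chooseBasis R N
  have hblocks : toMatrix (b.prod b') (b.prod b') f = Matrix.fromBlocks 1 0
      (toMatrix b b' (snd R M N ∘ₗ f ∘ₗ inl R M N))
      (toMatrix b' b' (snd R M N ∘ₗ f ∘ₗ inr R M N)) := by
    ext (i | i) (j | j) <;>
      simp [toMatrix_apply, hf, Matrix.one_apply, Finsupp.single_apply, eq_comm]
  rw [← det_toMatrix (b.prod b'), ← det_toMatrix b', hblocks, Matrix.det_fromBlocks_zero₁₂,
    Matrix.det_one, one_mul]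

end LinearMap

section

variable {𝕜 E F : Type*} [NontriviallyNormedField 𝕜] [NormedAddCommGroup E] [NormedSpace 𝕜 E]
  [NormedAddCommGroup F] [NormedSpace 𝕜 F] [FiniteDimensional 𝕜 E] [FiniteDimensional 𝕜 F]

theorem det_fderiv_eq_det_fderiv_fibre {T : E × F → E × F} {p : E × F}
    (hT : DifferentiableAt 𝕜 T p) (hfst : ∀ q, (T q).1 = q.1) :
    (fderiv 𝕜 T p).det = (fderiv 𝕜 (fun y => (T (p.1, y)).2) p.2).det := by
  have hfst_comp : (ContinuousLinearMap.fst 𝕜 E F).comp (fderiv 𝕜 T p) =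
      ContinuousLinearMap.fst 𝕜 E F := by
    have h := hasFDerivAt_fst.comp p hT.hasFDerivAt
    rw [show Prod.fst ∘ T = Prod.fst from funext hfst] at h
    exact h.unique hasFDerivAt_fst
  have hfibre : HasFDerivAt (fun y => (T (p.1, y)).2)
      ((ContinuousLinearMap.snd 𝕜 E F).comp ((fderiv 𝕜 T p).comp
        (ContinuousLinearMap.inr 𝕜 E F))) p.2 :=
    hasFDerivAt_snd.comp p.2 <|
      hT.hasFDerivAt.comp (x := p.2) (g := T) (hasFDerivAt_prodMk_right (𝕜 := 𝕜) p.1 p.2)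
  rw [hfibre.fderiv]
  exact LinearMap.det_eq_det_snd_comp_comp_inr_of_fst_apply _ fun x => congr($hfst_comp x)

end

theorem det_fderiv_mul_add {𝕜 ι : Type*} [NontriviallyNormedField 𝕜] [Fintype ι]
    (w c y : ι → 𝕜) :
    (fderiv 𝕜 (fun y : ι → 𝕜 => fun j => y j * w j + c j) y).det = ∏ j, w j := by
  classical
  have hderiv : HasFDerivAt (fun y : ι → 𝕜 => fun j => y j * w j + c j)
      (ContinuousLinearMap.pi fun j => w j • ContinuousLinearMap.proj j) y :=
    hasFDerivAt_pi.2 fun j =>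
      ((hasFDerivAt_apply (𝕜 := 𝕜) (F' := fun _ : ι => 𝕜) j y).mul_const (w j)).add_const (c j)
  rw [hderiv.fderiv]
  convert LinearMap.det_pi (R := 𝕜) (M := 𝕜) (fun j => w j • LinearMap.id) using 2
  · exact LinearMap.ext fun _ => rfl
  · simp

/-- The affine coupling map `T(a, b) = (a, b ⊙ exp(s(a)) + t(a))` with
differentiable `s`, `t` is differentiable everywhere, and the determinant of its
derivative equals `exp(Σ_j s_j(a))`; in particular it is positive and its log
absolute value is `Σ_j s_j(a)`. -/
theorem affine_coupling_jacobian {k₁ k₂ : ℕ}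
    (s t : (Fin k₁ → ℝ) → (Fin k₂ → ℝ))
    (hs : Differentiable ℝ s) (ht : Differentiable ℝ t)
    (T : (Fin k₁ → ℝ) × (Fin k₂ → ℝ) → (Fin k₁ → ℝ) × (Fin k₂ → ℝ))
    (hT : ∀ a b, T (a, b) = (a, fun j => b j * Real.exp (s a j) + t a j)) :
    ∀ (a : Fin k₁ → ℝ) (b : Fin k₂ → ℝ),
      DifferentiableAt ℝ T (a, b) ∧
      (fderiv ℝ T (a, b)).det = Real.exp (∑ j, s a j) ∧
      0 < (fderiv ℝ T (a, b)).det ∧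
      Real.log |(fderiv ℝ T (a, b)).det| = ∑ j, s a j := by
  intro a b
  have hT_eq : T = fun p => (p.1, fun j => p.2 j * Real.exp (s p.1 j) + t p.1 j) :=
    funext fun p => hT p.1 p.2
  have hdiff : DifferentiableAt ℝ T (a, b) := by
    rw [hT_eq]
    fun_prop
  have hdet : (fderiv ℝ T (a, b)).det = Real.exp (∑ j, s a j) := by
    rw [det_fderiv_eq_det_fderiv_fibre hdiff fun q => by rw [hT_eq], Real.exp_sum]
    simp only [hT]
    exact det_fderiv_mul_add _ (t a) b
  refine ⟨hdiff, hdet, hdet ▸ Real.exp_pos _, ?_⟩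
  rw [hdet, abs_of_pos (Real.exp_pos _), Real.log_exp]
end

section
/- Let m₀ ∈ ℝ, σ > 0, and β ∈ [0,1]. Let X and η be independent real random variables with X ~ N(m₀, σ²) and η ~ N(0, σ²), and set Y = √(1 − β²) · (X − m₀) + m₀ + β · η. Then the joint law of the pair (X, Y) is exchangeable: the distribution of (X, Y) on ℝ² equals the distribution of (Y, X). In particular the pCN proposal kernel is reversible with respect to the Gaussian prior N(m₀, σ²). -/
open MeasureTheory ProbabilityTheory Real
open scoped NNReal

/-! Write `X = m₀ + U`, `γ = N(0, σ²)` and `β = sin θ`, so that `√(1 - β²) = cos θ`. The pair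
`(U, η)` has law `γ ⊗ γ`, and `(X, Y)` and `(Y, X)` are the images under the affine map
`F (u, w) = (u + m₀, cos θ u + sin θ w + m₀)` of `(U, η)` and of its reflection
`(cos θ U + sin θ η, sin θ U - cos θ η)` respectively. The reflection is a rotation followed by
`w ↦ -w`, and both preserve `γ ⊗ γ`, so the two pairs have the same law. -/

lemma measurePreserving_reflection_gaussianReal_prod (v : ℝ≥0) (θ : ℝ) :
    MeasurePreserving (fun p : ℝ × ℝ => (cos θ * p.1 + sin θ * p.2, sin θ * p.1 - cos θ * p.2))
      ((gaussianReal 0 v).prod (gaussianReal 0 v)) ((gaussianReal 0 v).prod (gaussianReal 0 v)) := by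
  have hrot : MeasurePreserving (ContinuousLinearMap.rotation θ)
      ((gaussianReal 0 v).prod (gaussianReal 0 v)) ((gaussianReal 0 v).prod (gaussianReal 0 v)) :=
    ⟨by fun_prop, IsGaussian.map_rotation_eq_self (by simp [integral_id_gaussianReal]) θ⟩
  have hneg : MeasurePreserving (Prod.map id fun w : ℝ => -w)
      ((gaussianReal 0 v).prod (gaussianReal 0 v)) ((gaussianReal 0 v).prod (gaussianReal 0 v)) :=
    (MeasurePreserving.id _).prod
      ⟨by fun_prop, by simpa using gaussianReal_map_neg (μ := 0) (v := v)⟩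
  convert hneg.comp hrot using 1
  ext p <;> simp [ContinuousLinearMap.rotation_apply]; ring

lemma hasLaw_of_map_eq {Ω 𝓧 : Type*} [MeasurableSpace Ω] [MeasurableSpace 𝓧] {P : Measure Ω}
    {X : Ω → 𝓧} {μ : Measure 𝓧} [IsProbabilityMeasure μ] (h : P.map X = μ) : HasLaw X μ P :=
  ⟨.of_map_ne_zero (h ▸ IsProbabilityMeasure.ne_zero _), h⟩

theorem pcn_reversible_gaussian_prior_general {Ω : Type*} [MeasurableSpace Ω]
    (P : Measure Ω) [IsProbabilityMeasure P]
    (m₀ σ β : ℝ) (hβ0 : 0 ≤ β) (hβ1 : β ≤ 1)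
    (X η : Ω → ℝ)
    (hindep : IndepFun X η P)
    (hXlaw : Measure.map X P = gaussianReal m₀ ((σ ^ 2).toNNReal))
    (hηlaw : Measure.map η P = gaussianReal 0 ((σ ^ 2).toNNReal))
    (Y : Ω → ℝ)
    (hY : ∀ ω, Y ω = Real.sqrt (1 - β ^ 2) * (X ω - m₀) + m₀ + β * η ω) :
    Measure.map (fun ω => (X ω, Y ω)) P = Measure.map (fun ω => (Y ω, X ω)) P := by
  set γ := gaussianReal 0 (σ ^ 2).toNNReal
  set θ := arcsin β
  have hcos : cos θ = √(1 - β ^ 2) := cos_arcsin β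
  have hsin : sin θ = β := sin_arcsin (by linarith) hβ1
  have hY' : ∀ ω, Y ω = cos θ * (X ω - m₀) + m₀ + sin θ * η ω := by
    intro ω; rw [hY, hcos, hsin]
  let Z : Ω → ℝ × ℝ := fun ω => (X ω - m₀, η ω)
  let R : ℝ × ℝ → ℝ × ℝ := fun p => (cos θ * p.1 + sin θ * p.2, sin θ * p.1 - cos θ * p.2)
  let F : ℝ × ℝ → ℝ × ℝ := fun p => (p.1 + m₀, cos θ * p.1 + sin θ * p.2 + m₀)
  have hZ : HasLaw Z (γ.prod γ) P := by
    have hU := gaussianReal_sub_const (hasLaw_of_map_eq hXlaw) m₀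
    rw [sub_self] at hU
    exact (hindep.comp (measurable_sub_const m₀) measurable_id).hasLaw_prod hU
      (hasLaw_of_map_eq hηlaw)
  have hRZ : HasLaw (R ∘ Z) (γ.prod γ) P :=
    (measurePreserving_reflection_gaussianReal_prod _ θ).comp_hasLaw hZ
  have hF : HasLaw F ((γ.prod γ).map F) (γ.prod γ) := ⟨by fun_prop, rfl⟩
  have hXY : (fun ω => (X ω, Y ω)) = F ∘ Z := by
    ext ω <;> simp [F, Z, hY']; ring
  have hYX : (fun ω => (Y ω, X ω)) = F ∘ R ∘ Z := by
    ext ω <;> simp [F, R, Z, hY']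
    · ring
    · linear_combination (m₀ - X ω) * sin_sq_add_cos_sq θ
  rw [hXY, hYX, (hF.comp hZ).map_eq, (hF.comp hRZ).map_eq]

/-- The joint law of the current state `X ~ N(m₀, σ²)` and the pCN proposal
`Y = √(1 − β²)(X − m₀) + m₀ + β η` (with `η ~ N(0, σ²)` independent of `X`) is
exchangeable: `(X, Y)` and `(Y, X)` have the same distribution on ℝ²; i.e. the
pCN proposal kernel is reversible with respect to the Gaussian prior. -/
theorem pcn_reversible_gaussian_prior {Ω : Type*} [MeasurableSpace Ω]
    (P : Measure Ω) [IsProbabilityMeasure P]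
    (m₀ σ β : ℝ) (hσ : 0 < σ) (hβ0 : 0 ≤ β) (hβ1 : β ≤ 1)
    (X η : Ω → ℝ) (hX : Measurable X) (hη : Measurable η)
    (hindep : IndepFun X η P)
    (hXlaw : Measure.map X P = gaussianReal m₀ ((σ ^ 2).toNNReal))
    (hηlaw : Measure.map η P = gaussianReal 0 ((σ ^ 2).toNNReal))
    (Y : Ω → ℝ)
    (hY : ∀ ω, Y ω = Real.sqrt (1 - β ^ 2) * (X ω - m₀) + m₀ + β * η ω) :
    Measure.map (fun ω => (X ω, Y ω)) P = Measure.map (fun ω => (Y ω, X ω)) P :=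
  pcn_reversible_gaussian_prior_general P m₀ σ β hβ0 hβ1 X η hindep hXlaw hηlaw Y hY
end
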